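/- arXiv:1502.01741 — 3 statements merged into one kernel-verified Lean document; each statement's English description precedes it below -/
import Mathlib

section
/- For any Δ₊, Δ₋ in R^{n-1} and ε ≠ 0, the difference F(Δ₊/ε) - F(Δ₋/(-ε)) equals A · ((Δ₊+Δ₋)/ε), where A is the symmetric matrix A = [ ((s₊+s₋)/2)² Id − dd^T ] / ( s₊ s₋ (s₊+s₋)/2 ), with s₊ = sqrt(1+|Δ₊/ε|²), s₋ = sqrt(1+|Δ₋/ε|²), d = (Δ₊−Δ₋)/(2ε), and F(η) = η/sqrt(1+|η|²). -/
/-- Euclidean norm on `Fin k → ℝ`. -/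
noncomputable def enorm' {k : ℕ} (v : Fin k → ℝ) : ℝ := Real.sqrt (∑ i, v i ^ 2)

/-!
Put `a = Δ₊/ε` and `b = Δ₋/ε`, so the left side is `a/s₊ + b/s₋`. Since
`d ⬝ (a + b) = (|a|² - |b|²)/2 = (s₊² - s₋²)/2`, the vector `A (a + b)` is a combination of `a + b`
and `a - b` with scalar coefficients, and these reduce to `1/s₊` and `1/s₋` on `a` and `b`.
-/

open Matrix

theorem inv_smul_add_inv_smul_eq {𝕜 V : Type*} [Field 𝕜] [CharZero 𝕜] [AddCommGroup V]
    [Module 𝕜 V] {p q : 𝕜} (hp : p ≠ 0) (hq : q ≠ 0) (hpq : p + q ≠ 0) (a b : V) :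
    p⁻¹ • a + q⁻¹ • b = (p * q * ((p + q) / 2))⁻¹ •
      (((p + q) / 2) ^ 2 • (a + b) - ((p ^ 2 - q ^ 2) / 4) • (a - b)) := by
  match_scalars <;> field_simp <;> ring

theorem inv_smul_add_inv_smul_eq_mulVec {𝕜 ι : Type*} [Field 𝕜] [CharZero 𝕜] [Fintype ι]
    [DecidableEq ι] {p q : 𝕜} (hp : p ≠ 0) (hq : q ≠ 0) (hpq : p + q ≠ 0) (a b : ι → 𝕜)
    (hsq : p ^ 2 - q ^ 2 = a ⬝ᵥ a - b ⬝ᵥ b) :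
    let d := (2 : 𝕜)⁻¹ • (a - b)
    p⁻¹ • a + q⁻¹ • b = ((p * q * ((p + q) / 2))⁻¹ •
      (((p + q) / 2) ^ 2 • (1 : Matrix ι ι 𝕜) - vecMulVec d d)) *ᵥ (a + b) := by
  intro d
  have hdot : d ⬝ᵥ (a + b) = (p ^ 2 - q ^ 2) / 2 := by
    simp only [d, smul_dotProduct, sub_dotProduct, dotProduct_add, hsq, dotProduct_comm b a,
      smul_eq_mul]
    ring
  rw [inv_smul_add_inv_smul_eq hp hq hpq, smul_mulVec, sub_mulVec, smul_mulVec, one_mulVec,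
    vecMulVec_mulVec, op_smul_eq_smul, hdot]
  module

theorem enorm'_sq {k : ℕ} (v : Fin k → ℝ) : enorm' v ^ 2 = v ⬝ᵥ v := by
  rw [enorm', Real.sq_sqrt (by positivity)]
  simp [dotProduct, sq]

theorem stmt3_general (m : ℕ) (ε : ℝ) (Δp Δm : Fin m → ℝ) :
    let F : (Fin m → ℝ) → (Fin m → ℝ) := fun η => (Real.sqrt (1 + enorm' η ^ 2))⁻¹ • η
    let sp := Real.sqrt (1 + enorm' (ε⁻¹ • Δp) ^ 2)
    let sm := Real.sqrt (1 + enorm' ((-ε)⁻¹ • Δm) ^ 2)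
    let d : Fin m → ℝ := (2 * ε)⁻¹ • (Δp - Δm)
    let A : Matrix (Fin m) (Fin m) ℝ :=
      (sp * sm * ((sp + sm) / 2))⁻¹ •
        (((sp + sm) / 2) ^ 2 • (1 : Matrix (Fin m) (Fin m) ℝ) - Matrix.vecMulVec d d)
    F (ε⁻¹ • Δp) - F ((-ε)⁻¹ • Δm) = A.mulVec (ε⁻¹ • (Δp + Δm)) := by
  intro F sp sm d A
  have hneg : (-ε)⁻¹ • Δm = -(ε⁻¹ • Δm) := by rw [inv_neg, neg_smul]
  have hd : d = (2 : ℝ)⁻¹ • (ε⁻¹ • Δp - ε⁻¹ • Δm) := by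
    rw [← smul_sub, smul_smul, ← mul_inv]
  have hsum : ε⁻¹ • (Δp + Δm) = ε⁻¹ • Δp + ε⁻¹ • Δm := smul_add _ _ _
  have hsp : 0 < sp := Real.sqrt_pos.2 (by positivity)
  have hsm : 0 < sm := Real.sqrt_pos.2 (by positivity)
  have hsq : sp ^ 2 - sm ^ 2 = (ε⁻¹ • Δp) ⬝ᵥ (ε⁻¹ • Δp) - (ε⁻¹ • Δm) ⬝ᵥ (ε⁻¹ • Δm) := by
    rw [Real.sq_sqrt (by positivity), Real.sq_sqrt (by positivity), enorm'_sq, enorm'_sq, hneg,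
      neg_dotProduct_neg]
    ring
  show sp⁻¹ • ε⁻¹ • Δp - sm⁻¹ • (-ε)⁻¹ • Δm = A *ᵥ (ε⁻¹ • (Δp + Δm))
  rw [hneg, smul_neg, sub_neg_eq_add, hsum]
  simp only [A, hd]
  exact inv_smul_add_inv_smul_eq_mulVec hsp.ne' hsm.ne' (by positivity) _ _ hsq

theorem stmt3 (m : ℕ) (ε : ℝ) (hε : ε ≠ 0) (Δp Δm : Fin m → ℝ) :
    let F : (Fin m → ℝ) → (Fin m → ℝ) := fun η => (Real.sqrt (1 + enorm' η ^ 2))⁻¹ • η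
    let sp := Real.sqrt (1 + enorm' (ε⁻¹ • Δp) ^ 2)
    let sm := Real.sqrt (1 + enorm' ((-ε)⁻¹ • Δm) ^ 2)
    let d : Fin m → ℝ := (2 * ε)⁻¹ • (Δp - Δm)
    let A : Matrix (Fin m) (Fin m) ℝ :=
      (sp * sm * ((sp + sm) / 2))⁻¹ •
        (((sp + sm) / 2) ^ 2 • (1 : Matrix (Fin m) (Fin m) ℝ) - Matrix.vecMulVec d d)
    F (ε⁻¹ • Δp) - F ((-ε)⁻¹ • Δm) = A.mulVec (ε⁻¹ • (Δp + Δm)) :=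
  stmt3_general m ε Δp Δm
end

section
/- Let (Y_j)_{j=-M}^{M} be a sequence in R^{n-1} with Y_{-M} = Y_M = 0, and set Δ_j = Y_{j+1} − Y_j. If for every interior index j (|j| < M) and every coordinate i one has |e_i · (Δ_j − Δ_{j-1})| <= 2N ε², where ε = ℓ/M, then for all j one has |Δ_j/ε| <= 4Nℓ √(n-1). In particular, if ℓ <= 1/(4N√(n-1)) then |Δ_j/ε| <= 1 for all j. -/
open Finset

lemma abs_sub_le_mul_of_abs_succ_sub_le {h : ℕ → ℝ} {c : ℝ} {n : ℕ} (hc : 0 ≤ c)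
    (hstep : ∀ k, k + 1 < n → |h (k + 1) - h k| ≤ c) {a b : ℕ} (ha : a < n) (hb : b < n) :
    |h b - h a| ≤ c * n := by
  wlog hab : a ≤ b generalizing a b
  · rw [abs_sub_comm]; exact this hb ha (by omega)
  calc |h b - h a| = dist (h a) (h b) := by rw [Real.dist_eq, abs_sub_comm]
    _ ≤ ∑ k ∈ Ico a b, dist (h k) (h (k + 1)) := dist_le_Ico_sum_dist h hab
    _ ≤ #(Ico a b) • c := by
      refine sum_le_card_nsmul _ _ _ fun k hk => ?_
      rw [Real.dist_eq, abs_sub_comm]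
      exact hstep k (by simp at hk; omega)
    _ ≤ c * n := by
      rw [nsmul_eq_mul, mul_comm, Nat.card_Ico]
      gcongr
      exact_mod_cast (by omega : b - a ≤ n)

lemma abs_le_mul_of_sum_range_eq_zero {h : ℕ → ℝ} {c : ℝ} {n : ℕ} (hc : 0 ≤ c)
    (hstep : ∀ k, k + 1 < n → |h (k + 1) - h k| ≤ c) (hsum : ∑ k ∈ range n, h k = 0)
    {a : ℕ} (ha : a < n) : |h a| ≤ c * n := by
  have hn : (0 : ℝ) < n := by exact_mod_cast (by omega : 0 < n)
  refine le_of_mul_le_mul_left ?_ hn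
  calc n * |h a| = |∑ k ∈ range n, (h a - h k)| := by
        rw [sum_sub_distrib, hsum, sub_zero, sum_const, card_range, nsmul_eq_mul, abs_mul,
          Nat.abs_cast]
    _ ≤ ∑ k ∈ range n, |h a - h k| := abs_sum_le_sum_abs _ _
    _ ≤ ∑ _k ∈ range n, c * n :=
        sum_le_sum fun k hk => abs_sub_le_mul_of_abs_succ_sub_le hc hstep (mem_range.1 hk) ha
    _ = n * (c * n) := by rw [sum_const, card_range, nsmul_eq_mul]

lemma abs_sub_le_of_abs_second_diff_le {y : ℤ → ℝ} {c : ℝ} (hc : 0 ≤ c) {a : ℤ} {n : ℕ}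
    (ha : y a = 0) (hb : y (a + n) = 0)
    (hy : ∀ j, a < j → j < a + n → |y (j + 1) - 2 * y j + y (j - 1)| ≤ c)
    {j : ℤ} (hj₁ : a ≤ j) (hj₂ : j < a + n) : |y (j + 1) - y j| ≤ c * n := by
  set h : ℕ → ℝ := fun k => y (a + k + 1) - y (a + k) with hh
  have hstep : ∀ k, k + 1 < n → |h (k + 1) - h k| ≤ c := by
    intro k hk
    convert hy (a + k + 1) (by omega) (by omega) using 2
    simp only [hh]; push_cast; ring_nf
  have hsum : ∑ k ∈ range n, h k = 0 := by
    have htelescope := sum_range_sub (fun k : ℕ => y (a + k)) n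
    simp only [Nat.cast_add, Nat.cast_one, Nat.cast_zero, add_zero, ha, hb, sub_zero,
      ← add_assoc] at htelescope
    exact htelescope
  have := abs_le_mul_of_sum_range_eq_zero hc hstep hsum (a := (j - a).toNat) (by omega)
  simpa only [hh, show a + ((j - a).toNat : ℤ) = j by omega] using this

lemma enorm'_le_sqrt_card_mul {k : ℕ} {v : Fin k → ℝ} {B : ℝ} (hB : 0 ≤ B)
    (hv : ∀ i, |v i| ≤ B) : enorm' v ≤ √k * B := by
  calc enorm' v ≤ √(∑ _i : Fin k, B ^ 2) :=
        Real.sqrt_le_sqrt <| sum_le_sum fun i _ =>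
          sq_le_sq' (abs_le.1 (hv i)).1 (abs_le.1 (hv i)).2
    _ = √k * B := by
      rw [sum_const, card_univ, Fintype.card_fin, nsmul_eq_mul,
        Real.sqrt_mul (Nat.cast_nonneg k), Real.sqrt_sq hB]

theorem stmt5_general (m M : ℕ) (ℓ N : ℝ) (hℓ : 0 < ℓ) (hN : 0 < N)
    (Y : ℤ → Fin m → ℝ) (hYa : Y (-(M:ℤ)) = 0) (hYb : Y (M:ℤ) = 0) :
    let ε := ℓ / M
    let Δ : ℤ → Fin m → ℝ := fun j => Y (j + 1) - Y j
    (∀ j : ℤ, |j| < (M:ℤ) → ∀ i : Fin m, |(Δ j - Δ (j - 1)) i| ≤ 2 * N * ε ^ 2) →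
      (∀ j : ℤ, -(M:ℤ) ≤ j → j < (M:ℤ) → enorm' (Δ j) / ε ≤ 4 * N * ℓ * Real.sqrt m) ∧
      (ℓ ≤ 1 / (4 * N * Real.sqrt m) →
        ∀ j : ℤ, -(M:ℤ) ≤ j → j < (M:ℤ) → enorm' (Δ j) / ε ≤ 1) := by
  intro ε Δ hyp
  have hsecond : ∀ i k, -(M:ℤ) < k → k < -M + (2 * M : ℕ) →
      |Y (k + 1) i - 2 * Y k i + Y (k - 1) i| ≤ 2 * N * ε ^ 2 := fun i k hk₁ hk₂ => by
    convert hyp k (abs_lt.2 ⟨hk₁, by omega⟩) i using 2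
    simp only [Δ, Pi.sub_apply, sub_add_cancel]; ring
  have bound : ∀ j : ℤ, -(M:ℤ) ≤ j → j < M → enorm' (Δ j) / ε ≤ 4 * N * ℓ * √m := by
    intro j hj₁ hj₂
    have hM : (M : ℝ) ≠ 0 := by exact_mod_cast (by omega : M ≠ 0)
    have hε : 0 < ε := div_pos hℓ (by positivity)
    have hcoord : ∀ i, |Δ j i| ≤ 2 * N * ε ^ 2 * (2 * M : ℕ) := fun i =>
      abs_sub_le_of_abs_second_diff_le (y := fun j => Y j i) (a := -M) (by positivity)
        (by simp [hYa]) (by simp [hYb, two_mul]) (hsecond i) (by omega) (by omega)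
    rw [div_le_iff₀ hε]
    calc enorm' (Δ j) ≤ √m * (2 * N * ε ^ 2 * (2 * M : ℕ)) :=
          enorm'_le_sqrt_card_mul (by positivity) hcoord
      _ = 4 * N * ℓ * √m * ε := by simp only [ε]; push_cast; field_simp; ring
  refine ⟨bound, fun hsmall j hj₁ hj₂ => (bound j hj₁ hj₂).trans ?_⟩
  rcases (Real.sqrt_nonneg m).eq_or_lt with hm | hm
  · simp [← hm]
  · rw [le_div_iff₀ (by positivity)] at hsmall
    linarith

theorem stmt5 (m M : ℕ) (hM : 0 < M) (ℓ N : ℝ) (hℓ : 0 < ℓ) (hN : 0 < N)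
    (Y : ℤ → Fin m → ℝ) (hYa : Y (-(M:ℤ)) = 0) (hYb : Y (M:ℤ) = 0) :
    let ε := ℓ / M
    let Δ : ℤ → Fin m → ℝ := fun j => Y (j + 1) - Y j
    (∀ j : ℤ, |j| < (M:ℤ) → ∀ i : Fin m, |(Δ j - Δ (j - 1)) i| ≤ 2 * N * ε ^ 2) →
      (∀ j : ℤ, -(M:ℤ) ≤ j → j < (M:ℤ) → enorm' (Δ j) / ε ≤ 4 * N * ℓ * Real.sqrt m) ∧
      (ℓ ≤ 1 / (4 * N * Real.sqrt m) →
        ∀ j : ℤ, -(M:ℤ) ≤ j → j < (M:ℤ) → enorm' (Δ j) / ε ≤ 1) :=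
  stmt5_general m M ℓ N hℓ hN Y hYa hYb
end

section
/- Let h: Q → R be C^{1,α} on a convex set Q ⊆ R^n with Hölder constant H, i.e., |h(q+v) − h(q) − ∇h(q)·v| <= H|v|^{1+α} for all q, q+v in Q. Then for q, q+(ε,Δ) in Q with |Δ| <= |ε|, the midpoint value satisfies |(e^{h(q)} + e^{h(q+(ε,Δ))})/2 − e^{h(q + (ε,Δ)/2)}| <= C(h) |ε|^{1+α} for a constant C(h) depending only on H, α, and sup e^h, sup|∇h| on Q. -/
/-- Euclidean inner product on `Fin k → ℝ`. -/
def dotp {k : ℕ} (a b : Fin k → ℝ) : ℝ := ∑ i, a i * b i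

/-!
Put `w = v / 2` and `p = q + w`. Applying the first-order expansion at the midpoint `p` in the
directions `w` and `-w`, the linear terms cancel: `h q + h (q + v) - 2 h p = O(|w|^(1+α))`, while
each of `h q - h p`, `h (q + v) - h p` is `O(|w|)`. Since `exp` is convex with `exp ≤ B₁` on the
relevant values, `exp y - exp x - exp x (y - x) = O(B₁ (y - x)²)`, so the average of
`exp (h q)`, `exp (h (q + v))` differs from `exp (h p)` by `O(|w|² + |w|^(1+α))`. For `|ε| ≤ 1`
this is `O(|ε|^(1+α))` because `|w| ≤ |ε|`; for `|ε| > 1` the difference is trivially at most `B₁`.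
-/

open Real

lemma enorm'_eq_norm {k : ℕ} (v : Fin k → ℝ) :
    enorm' v = ‖(WithLp.toLp 2 v : EuclideanSpace ℝ (Fin k))‖ := by
  simp [enorm', EuclideanSpace.norm_eq]

lemma dotp_eq_inner {k : ℕ} (a b : Fin k → ℝ) :
    dotp a b = inner ℝ (WithLp.toLp 2 a : EuclideanSpace ℝ (Fin k)) (WithLp.toLp 2 b) := by
  simp [dotp, PiLp.inner_apply, mul_comm]

lemma enorm'_nonneg {k : ℕ} (v : Fin k → ℝ) : 0 ≤ enorm' v := sqrt_nonneg _

lemma enorm'_smul {k : ℕ} (c : ℝ) (v : Fin k → ℝ) : enorm' (c • v) = |c| * enorm' v := by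
  simp only [enorm'_eq_norm, WithLp.toLp_smul, norm_smul, Real.norm_eq_abs]

lemma enorm'_neg {k : ℕ} (v : Fin k → ℝ) : enorm' (-v) = enorm' v := by
  simp only [enorm'_eq_norm, WithLp.toLp_neg, norm_neg]

lemma dotp_neg_right {k : ℕ} (a b : Fin k → ℝ) : dotp a (-b) = -dotp a b := by
  simp only [dotp_eq_inner, WithLp.toLp_neg, inner_neg_right]

lemma abs_dotp_le {k : ℕ} (a b : Fin k → ℝ) : |dotp a b| ≤ enorm' a * enorm' b := by
  simpa only [dotp_eq_inner, enorm'_eq_norm] using abs_real_inner_le_norm _ _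

lemma enorm'_cons_le {m : ℕ} {ε : ℝ} {Δ : Fin m → ℝ} (hΔ : enorm' Δ ≤ |ε|) :
    enorm' (Fin.cons ε Δ : Fin (m + 1) → ℝ) ≤ 2 * |ε| := by
  have hΔsq : ∑ i, Δ i ^ 2 ≤ ε ^ 2 := by
    rw [← sq_abs ε, ← sq_sqrt (Finset.sum_nonneg fun i _ => sq_nonneg (Δ i))]
    exact pow_le_pow_left₀ (sqrt_nonneg _) hΔ 2
  rw [enorm', Fin.sum_univ_succ, sqrt_le_left (by positivity)]
  simp only [Fin.cons_zero, Fin.cons_succ]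
  nlinarith [sq_abs ε]

lemma exp_mul_sub_le_exp_sub_exp (x y : ℝ) : exp x * (y - x) ≤ exp y - exp x := by
  have := mul_le_mul_of_nonneg_left (add_one_le_exp (y - x)) (exp_pos x).le
  rw [← exp_add, add_sub_cancel] at this
  linarith

lemma abs_exp_sub_exp_sub_mul_le {x y B : ℝ} (hx : exp x ≤ B) (hy : exp y ≤ B) :
    |exp y - exp x - exp x * (y - x)| ≤ B * (y - x) ^ 2 := by
  have lower := exp_mul_sub_le_exp_sub_exp x y
  have upper := exp_mul_sub_le_exp_sub_exp y x
  have hxpos := exp_pos x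
  rw [abs_le]
  constructor
  · nlinarith [sq_nonneg (y - x)]
  · rcases le_total x y with hxy | hyx
    · nlinarith [mul_le_mul_of_nonneg_right hy (sub_nonneg.2 hxy)]
    · nlinarith [mul_le_mul_of_nonneg_right hx (sub_nonneg.2 hyx)]

lemma abs_exp_average_sub_exp_le {x y₁ y₂ B : ℝ} (hx : exp x ≤ B) (hy₁ : exp y₁ ≤ B)
    (hy₂ : exp y₂ ≤ B) :
    |(exp y₁ + exp y₂) / 2 - exp x|
      ≤ B * ((y₁ - x) ^ 2 + (y₂ - x) ^ 2) / 2 + B * |y₁ + y₂ - 2 * x| / 2 := by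
  have h₁ := abs_exp_sub_exp_sub_mul_le hx hy₁
  have h₂ := abs_exp_sub_exp_sub_mul_le hx hy₂
  have hlin : |exp x * (y₁ + y₂ - 2 * x)| ≤ B * |y₁ + y₂ - 2 * x| := by
    rw [abs_mul, abs_of_pos (exp_pos x)]
    exact mul_le_mul_of_nonneg_right hx (abs_nonneg _)
  have hsplit : (exp y₁ + exp y₂) / 2 - exp x
      = ((exp y₁ - exp x - exp x * (y₁ - x)) + (exp y₂ - exp x - exp x * (y₂ - x))
          + exp x * (y₁ + y₂ - 2 * x)) / 2 := by ring
  rw [hsplit, abs_div, abs_two]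
  have := abs_add_three (exp y₁ - exp x - exp x * (y₁ - x)) (exp y₂ - exp x - exp x * (y₂ - x))
    (exp x * (y₁ + y₂ - 2 * x))
  linarith

lemma abs_exp_average_sub_exp_le_of_le {x y₁ y₂ B : ℝ} (hx : exp x ≤ B) (hy₁ : exp y₁ ≤ B)
    (hy₂ : exp y₂ ≤ B) : |(exp y₁ + exp y₂) / 2 - exp x| ≤ B := by
  rw [abs_le]
  constructor <;> linarith [exp_pos x, exp_pos y₁, exp_pos y₂]
lemma sq_mul_add_mul_rpow_le {B H α t s : ℝ} (hB : 0 ≤ B) (hH : 0 ≤ H) (hα : 0 ≤ α)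
    (hα1 : α ≤ 1) (ht : 0 ≤ t) (hts : t ≤ s) (hs : s ≤ 1) :
    (B * t + H * t ^ (1 + α)) ^ 2 ≤ (B + H) ^ 2 * s ^ (1 + α) := by
  have hs₀ : 0 ≤ s := ht.trans hts
  have ht_rpow : t ^ (1 + α) ≤ t := by
    simpa using rpow_le_rpow_of_exponent_ge' ht (hts.trans hs) zero_le_one (by linarith : 1 ≤ 1 + α)
  have hs_sq : s ^ 2 ≤ s ^ (1 + α) := by
    rw [← rpow_natCast]
    exact rpow_le_rpow_of_exponent_ge' hs₀ hs (by linarith) (by norm_num; linarith)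
  calc (B * t + H * t ^ (1 + α)) ^ 2 ≤ ((B + H) * s) ^ 2 := by
        gcongr
        nlinarith
    _ = (B + H) ^ 2 * s ^ 2 := mul_pow _ _ _
    _ ≤ (B + H) ^ 2 * s ^ (1 + α) := by gcongr

section Midpoint

variable {k : ℕ} {Q : Set (Fin k → ℝ)} {h : (Fin k → ℝ) → ℝ} {g : (Fin k → ℝ) → (Fin k → ℝ)}
  {H α B₁ B₂ : ℝ}

lemma abs_exp_midpoint_sub_le (hQ : Convex ℝ Q)
    (htaylor : ∀ q v, q ∈ Q → q + v ∈ Q →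
      |h (q + v) - h q - dotp (g q) v| ≤ H * enorm' v ^ (1 + α))
    (hexp : ∀ q ∈ Q, exp (h q) ≤ B₁) (hgrad : ∀ q ∈ Q, enorm' (g q) ≤ B₂)
    {q v : Fin k → ℝ} (hq : q ∈ Q) (hqv : q + v ∈ Q) :
    |(exp (h q) + exp (h (q + v))) / 2 - exp (h (q + (1 / 2 : ℝ) • v))|
      ≤ B₁ * (B₂ * enorm' ((1 / 2 : ℝ) • v) + H * enorm' ((1 / 2 : ℝ) • v) ^ (1 + α)) ^ 2
        + B₁ * H * enorm' ((1 / 2 : ℝ) • v) ^ (1 + α) := by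
  set w := (1 / 2 : ℝ) • v
  set p := q + w
  set r := H * enorm' w ^ (1 + α)
  have hp : p ∈ Q := hQ.add_smul_mem hq hqv ⟨by norm_num, by norm_num⟩
  have hforward : |h (q + v) - h p - dotp (g p) w| ≤ r := by
    have := htaylor p w hp (by rwa [show p + w = q + v by module])
    rwa [show p + w = q + v by module] at this
  have hbackward : |h q - h p + dotp (g p) w| ≤ r := by
    have := htaylor p (-w) hp (by rwa [show p + -w = q by module])
    rwa [show p + -w = q by module, dotp_neg_right, sub_neg_eq_add, enorm'_neg] at this
  have hlin : |dotp (g p) w| ≤ B₂ * enorm' w :=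
    (abs_dotp_le _ _).trans (mul_le_mul_of_nonneg_right (hgrad p hp) (enorm'_nonneg w))
  have hq_dev : |h q - h p| ≤ B₂ * enorm' w + r := by
    have := abs_sub (h q - h p + dotp (g p) w) (dotp (g p) w)
    rw [add_sub_cancel_right] at this
    linarith
  have hqv_dev : |h (q + v) - h p| ≤ B₂ * enorm' w + r := by
    have := abs_add_le (h (q + v) - h p - dotp (g p) w) (dotp (g p) w)
    rw [sub_add_cancel] at this
    linarith
  have hsum : |h q + h (q + v) - 2 * h p| ≤ 2 * r := by
    have := abs_add_le (h q - h p + dotp (g p) w) (h (q + v) - h p - dotp (g p) w)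
    rw [show h q - h p + dotp (g p) w + (h (q + v) - h p - dotp (g p) w)
      = h q + h (q + v) - 2 * h p by ring] at this
    linarith
  have hB₁ : 0 ≤ B₁ := (exp_pos _).le.trans (hexp q hq)
  calc _ ≤ B₁ * ((h q - h p) ^ 2 + (h (q + v) - h p) ^ 2) / 2
        + B₁ * |h q + h (q + v) - 2 * h p| / 2 :=
        abs_exp_average_sub_exp_le (hexp p hp) (hexp q hq) (hexp _ hqv)
    _ ≤ B₁ * ((B₂ * enorm' w + r) ^ 2 + (B₂ * enorm' w + r) ^ 2) / 2 + B₁ * (2 * r) / 2 := by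
        gcongr B₁ * (?_ + ?_) / 2 + B₁ * ?_ / 2
        · exact sq_le_sq.2 (hq_dev.trans (le_abs_self _))
        · exact sq_le_sq.2 (hqv_dev.trans (le_abs_self _))
    _ = _ := by ring

end Midpoint

theorem stmt8_general (m : ℕ) (α H B₁ B₂ : ℝ) (hα : 0 < α) (hα1 : α ≤ 1) (hH : 0 < H)
    (hB₁ : 0 < B₁) :
    ∃ C > (0:ℝ), ∀ (Q : Set (Fin (m + 1) → ℝ)), Convex ℝ Q →
      ∀ (h : (Fin (m + 1) → ℝ) → ℝ) (g : (Fin (m + 1) → ℝ) → (Fin (m + 1) → ℝ)),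
      (∀ q v : Fin (m + 1) → ℝ, q ∈ Q → q + v ∈ Q →
        |h (q + v) - h q - dotp (g q) v| ≤ H * enorm' v ^ (1 + α)) →
      (∀ q ∈ Q, Real.exp (h q) ≤ B₁) →
      (∀ q ∈ Q, enorm' (g q) ≤ B₂) →
      ∀ (q : Fin (m + 1) → ℝ) (ε : ℝ) (Δ : Fin m → ℝ),
        q ∈ Q → q + (Fin.cons ε Δ : Fin (m + 1) → ℝ) ∈ Q → enorm' Δ ≤ |ε| →
        |(Real.exp (h q) + Real.exp (h (q + (Fin.cons ε Δ : Fin (m + 1) → ℝ)))) / 2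
            - Real.exp (h (q + (1 / 2 : ℝ) • (Fin.cons ε Δ : Fin (m + 1) → ℝ)))|
          ≤ C * |ε| ^ (1 + α) := by
  refine ⟨B₁ * ((B₂ + H) ^ 2 + H + 1), by positivity, ?_⟩
  intro Q hQ h g htaylor hexp hgrad q ε Δ hq hqv hΔ
  set v : Fin (m + 1) → ℝ := Fin.cons ε Δ
  have hB₂ : 0 ≤ B₂ := (enorm'_nonneg _).trans (hgrad q hq)
  have hw : enorm' ((1 / 2 : ℝ) • v) ≤ |ε| := by
    rw [enorm'_smul]
    linarith [enorm'_cons_le hΔ, abs_of_pos (one_half_pos : (0 : ℝ) < 1 / 2)]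
  rcases le_or_gt |ε| 1 with hsmall | hlarge
  · calc _ ≤ _ := abs_exp_midpoint_sub_le hQ htaylor hexp hgrad hq hqv
      _ ≤ B₁ * ((B₂ + H) ^ 2 * |ε| ^ (1 + α)) + B₁ * H * |ε| ^ (1 + α) := by
          gcongr
          · exact sq_mul_add_mul_rpow_le hB₂ hH.le hα.le hα1 (enorm'_nonneg _) hw hsmall
          · exact enorm'_nonneg _
      _ ≤ B₁ * ((B₂ + H) ^ 2 + H + 1) * |ε| ^ (1 + α) := by
          linarith [mul_nonneg hB₁.le (by positivity : 0 ≤ |ε| ^ (1 + α))]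
  · have hmid : q + (1 / 2 : ℝ) • v ∈ Q := hQ.add_smul_mem hq hqv ⟨by norm_num, by norm_num⟩
    have hone : 1 ≤ |ε| ^ (1 + α) := one_le_rpow hlarge.le (by linarith)
    calc _ ≤ B₁ := abs_exp_average_sub_exp_le_of_le (hexp _ hmid) (hexp q hq) (hexp _ hqv)
      _ ≤ B₁ * ((B₂ + H) ^ 2 + H + 1) * |ε| ^ (1 + α) := by
          have hC : 1 ≤ (B₂ + H) ^ 2 + H + 1 := by linarith [sq_nonneg (B₂ + H)]
          rw [mul_assoc]
          exact le_mul_of_one_le_right hB₁.le (one_le_mul_of_one_le_of_one_le hC hone)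

theorem stmt8 (m : ℕ) (α H B₁ B₂ : ℝ) (hα : 0 < α) (hα1 : α ≤ 1) (hH : 0 < H)
    (hB₁ : 0 < B₁) (hB₂ : 0 < B₂) :
    ∃ C > (0:ℝ), ∀ (Q : Set (Fin (m + 1) → ℝ)), Convex ℝ Q →
      ∀ (h : (Fin (m + 1) → ℝ) → ℝ) (g : (Fin (m + 1) → ℝ) → (Fin (m + 1) → ℝ)),
      (∀ q v : Fin (m + 1) → ℝ, q ∈ Q → q + v ∈ Q →
        |h (q + v) - h q - dotp (g q) v| ≤ H * enorm' v ^ (1 + α)) →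
      (∀ q ∈ Q, Real.exp (h q) ≤ B₁) →
      (∀ q ∈ Q, enorm' (g q) ≤ B₂) →
      ∀ (q : Fin (m + 1) → ℝ) (ε : ℝ) (Δ : Fin m → ℝ),
        q ∈ Q → q + (Fin.cons ε Δ : Fin (m + 1) → ℝ) ∈ Q → enorm' Δ ≤ |ε| →
        |(Real.exp (h q) + Real.exp (h (q + (Fin.cons ε Δ : Fin (m + 1) → ℝ)))) / 2
            - Real.exp (h (q + (1 / 2 : ℝ) • (Fin.cons ε Δ : Fin (m + 1) → ℝ)))|
          ≤ C * |ε| ^ (1 + α) :=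
  stmt8_general m α H B₁ B₂ hα hα1 hH hB₁
end
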